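/- arXiv:1509.01942 — 2 statements merged into one kernel-verified Lean document; each statement's English description precedes it below -/
import Mathlib

section
/- Let U > 0 and let {a_n}_{n≥0} be a sequence of nonnegative real numbers such that a_0 ≤ U and a_n ≤ a_{n−1}(1 − a_{n−1}/U) for all n > 0. Then a_n ≤ U/(n+1) for all n ≥ 0. -/
/-- **Lemma 1 of the paper.** If `U > 0`, `a` is a sequence of nonnegative reals with
`a 0 ≤ U` and `a n ≤ a (n-1) * (1 - a (n-1) / U)` for all `n > 0`,
then `a n ≤ U / (n + 1)` for all `n`. -/
theorem sequence_decay (U : ℝ) (hU : 0 < U) (a : ℕ → ℝ)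
    (hnonneg : ∀ n, 0 ≤ a n) (h0 : a 0 ≤ U)
    (hrec : ∀ n, 0 < n → a n ≤ a (n - 1) * (1 - a (n - 1) / U)) :
    ∀ n, a n ≤ U / (n + 1) := by
  intro n
  induction n with
  | zero => simpa using h0
  | succ n ih =>
    have hrec' := hrec (n + 1) (Nat.succ_pos n)
    simp only [Nat.add_sub_cancel] at hrec'
    set x := a n with hx
    have hx0 : 0 ≤ x := hnonneg n
    have hn1 : (0:ℝ) < (n:ℝ) + 1 := by positivity
    have h1 : ((n:ℝ) + 1) * x ≤ U := by
      nlinarith [(le_div_iff₀ hn1).mp ih]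
    have hxU : x ≤ U := by nlinarith
    have key : x * (1 - x / U) ≤ U / ((n:ℝ) + 1 + 1) := by
      rw [le_div_iff₀ (by positivity)]
      have expand : x * (1 - x / U) = x * (U - x) / U := by
        field_simp
      rw [expand, div_mul_eq_mul_div, div_le_iff₀ hU]
      nlinarith [mul_nonneg (sub_nonneg.mpr h1) (sub_nonneg.mpr hxU), sq_nonneg x]
    calc a (n + 1) ≤ x * (1 - x / U) := hrec'
      _ ≤ U / ((n:ℝ) + 1 + 1) := key
      _ = U / ((n + 1 : ℕ) + 1) := by push_cast; ring
end

section
/- Let η > 0 and let (r_m)_{m≥0} and (G_m)_{m≥0} be sequences of nonnegative reals such that r_0 ≤ η, and for every m ≥ 1: r_m² ≤ r_{m−1}² − G_{m−1} and r_{m−1}² ≤ η·√(G_{m−1}). Then r_m ≤ η·(m+1)^{−1/2} for every m ≥ 0. -/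
/-- **Analytic core of Theorem 3 (rate of convergence of NOMP).**
If `η > 0`, `r 0 ≤ η`, and for every `m ≥ 1` both `r m ^ 2 ≤ r (m-1) ^ 2 - G (m-1)`
and `r (m-1) ^ 2 ≤ η * √(G (m-1))` hold, then `r m ≤ η * (m+1)^(-1/2)`. -/
theorem nomp_rate_of_convergence (η : ℝ) (hη : 0 < η) (r G : ℕ → ℝ)
    (hr : ∀ m, 0 ≤ r m) (hG : ∀ m, 0 ≤ G m) (h0 : r 0 ≤ η)
    (hdec : ∀ m, 1 ≤ m → r m ^ 2 ≤ r (m - 1) ^ 2 - G (m - 1))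
    (hholder : ∀ m, 1 ≤ m → r (m - 1) ^ 2 ≤ η * Real.sqrt (G (m - 1))) :
    ∀ m, r m ≤ η * ((m : ℝ) + 1) ^ (-(1 : ℝ) / 2) := by
  have key : ∀ m, (r m) ^ 2 * ((m : ℝ) + 1) ≤ η ^ 2 := by
    intro m
    induction m with
    | zero =>
      simpa using pow_le_pow_left₀ (hr 0) h0 2
    | succ n ih =>
      have h1 := hdec (n + 1) (by omega)
      have h2 := hholder (n + 1) (by omega)
      simp only [Nat.add_sub_cancel] at h1 h2
      have hs : (Real.sqrt (G n)) ^ 2 = G n := Real.sq_sqrt (hG n)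
      have hbb : (r n ^ 2) * (r n ^ 2) ≤ η ^ 2 * G n := by
        calc (r n ^ 2) * (r n ^ 2) ≤ (η * Real.sqrt (G n)) * (η * Real.sqrt (G n)) :=
              mul_le_mul h2 h2 (sq_nonneg _) (by positivity)
          _ = η ^ 2 * Real.sqrt (G n) ^ 2 := by ring
          _ = η ^ 2 * G n := by rw [hs]
      have hn : (0 : ℝ) ≤ (n : ℝ) := Nat.cast_nonneg n
      have hu : 0 ≤ η ^ 2 - ((n : ℝ) + 1) * (r n) ^ 2 := by linarith [ih]
      have h3 : η ^ 2 * r (n + 1) ^ 2 ≤ η ^ 2 * r n ^ 2 - r n ^ 2 * r n ^ 2 := by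
        nlinarith [mul_nonneg (sq_nonneg η) (hG n)]
      have hfinal : (η ^ 2 * r n ^ 2 - r n ^ 2 * r n ^ 2) * ((n : ℝ) + 2) ≤ η ^ 4 := by
        nlinarith [mul_nonneg (mul_nonneg (mul_nonneg hn hn) hu) (sq_nonneg η),
          mul_nonneg (mul_nonneg hn hu) (sq_nonneg η),
          mul_nonneg hn (mul_nonneg hu hu), mul_nonneg hu hu, sq_nonneg (η ^ 2)]
      have h4 : η ^ 2 * (r (n + 1) ^ 2 * ((n : ℝ) + 2)) ≤ η ^ 4 := by nlinarith [hn]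
      push_cast
      have hη2 : (0 : ℝ) < η ^ 2 := by positivity
      nlinarith [h4]
  intro m
  have hm1 : (0 : ℝ) < (m : ℝ) + 1 := by positivity
  have hrpow : ((m : ℝ) + 1) ^ (-(1 : ℝ) / 2) = (Real.sqrt ((m : ℝ) + 1))⁻¹ := by
    rw [Real.sqrt_eq_rpow, ← Real.rpow_neg hm1.le]
    norm_num
  rw [hrpow]
  have hsq : Real.sqrt ((r m) ^ 2 * ((m : ℝ) + 1)) ≤ Real.sqrt (η ^ 2) :=
    Real.sqrt_le_sqrt (key m)
  rw [Real.sqrt_mul (sq_nonneg _), Real.sqrt_sq (hr m), Real.sqrt_sq hη.le] at hsq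
  have hspos : 0 < Real.sqrt ((m : ℝ) + 1) := Real.sqrt_pos.mpr (by positivity)
  rw [mul_comm η, ← div_eq_inv_mul, le_div_iff₀ hspos]
  linarith [hsq]
end
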